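/- arXiv:cs/0406034 — 5 statements merged into one kernel-verified Lean document; each statement's English description precedes it below -/
import Mathlib

section
/- Let s > 0 and let f(s, r1, r2) = r1 + (r1 - r2)/(e^{(r1-r2)/s} - 1) (interpreted as r1 + s when r1 = r2, by continuity). If x1, x2 > 0 satisfy r1 ≤ 2s(ln x1 + 1) and r2 ≤ 2s(ln x2 + 1), then f(s, r1, r2) ≤ 2s(ln(x1 + x2) + 1). -/
/-- The TwoStable competitive ratio `f(s,r₁,r₂)` (interpreted as `r₁ + s` when `r₁ = r₂`). -/
noncomputable def twoStableRatio (s r₁ r₂ : ℝ) : ℝ :=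
  if r₁ = r₂ then r₁ + s else r₁ + (r₁ - r₂) / (Real.exp ((r₁ - r₂) / s) - 1)

lemma aux_div_le_log (x : ℝ) (hx : 0 < x) : x / (1 + x) ≤ Real.log (1 + x) := by
  have h1x : (0:ℝ) < 1 + x := by linarith
  have h := Real.log_le_sub_one_of_pos (show (0:ℝ) < (1+x)⁻¹ by positivity)
  rw [Real.log_inv] at h
  have heq : (1+x)⁻¹ - 1 = -(x/(1+x)) := by field_simp; ring
  rw [heq] at h
  linarith

lemma key_pos (v : ℝ) (hv : 0 < v) :
    v / (Real.exp (2*v) - 1) ≤ Real.log (1 + Real.exp (-v)) := by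
  have he : Real.exp (-v) > 0 := Real.exp_pos _
  have hbound := aux_div_le_log (Real.exp (-v)) he
  have hevpos : (0:ℝ) < Real.exp v := Real.exp_pos _
  have hx : Real.exp (-v) / (1 + Real.exp (-v)) = 1 / (Real.exp v + 1) := by
    rw [Real.exp_neg]
    field_simp
  rw [hx] at hbound
  refine le_trans ?_ hbound
  have hd : (0:ℝ) < Real.exp (2*v) - 1 := by
    have : (1:ℝ) < Real.exp (2*v) := Real.one_lt_exp_iff.mpr (by linarith)
    linarith
  rw [div_le_div_iff₀ hd (by positivity)]
  have h2v : Real.exp (2*v) = Real.exp v * Real.exp v := by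
    rw [← Real.exp_add]; ring_nf
  have hev : v + 1 ≤ Real.exp v := Real.add_one_le_exp v
  nlinarith

lemma key_all (v : ℝ) (hv : v ≠ 0) :
    v / (Real.exp (2*v) - 1) ≤ Real.log (1 + Real.exp (-v)) := by
  rcases lt_or_gt_of_ne hv with hneg | hpos
  · -- use symmetry: statement at v equals statement at -v shifted
    have hw : 0 < -v := by linarith
    have h := key_pos (-v) hw
    -- log(1+e^{v}) with rewriting
    have hlog : Real.log (1 + Real.exp (-v)) = -v + Real.log (1 + Real.exp v) := by
      have : (1 : ℝ) + Real.exp (-v) = Real.exp (-v) * (1 + Real.exp v) := by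
        rw [Real.exp_neg]
        field_simp
        ring
      rw [this, Real.log_mul (by positivity) (by positivity), Real.log_exp]
    have hdenom : Real.exp (2*v) - 1 < 0 := by
      have : Real.exp (2*v) < 1 := by
        rw [← Real.exp_zero]
        exact Real.exp_lt_exp.mpr (by linarith)
      linarith
    have hdenom' : (0:ℝ) < Real.exp (2*(-v)) - 1 := by
      have : (1:ℝ) < Real.exp (2*(-v)) := Real.one_lt_exp_iff.mpr (by linarith)
      linarith
    have halg : v / (Real.exp (2*v) - 1) = -v + (-v) / (Real.exp (2*(-v)) - 1) := by
      have h1 : Real.exp (2*(-v)) = (Real.exp (2*v))⁻¹ := by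
        rw [← Real.exp_neg]; ring_nf
      rw [h1]
      have hne : Real.exp (2*v) ≠ 0 := (Real.exp_pos _).ne'
      have hne2 : Real.exp (2*v) - 1 ≠ 0 := ne_of_lt hdenom
      have hne3 : 1 - Real.exp (2*v) ≠ 0 := by
        intro hc; apply hne2; linarith
      have h4 : (Real.exp (2*v))⁻¹ - 1 = -((Real.exp (2*v) - 1) / Real.exp (2*v)) := by
        rw [div_eq_mul_inv, sub_mul, mul_inv_cancel₀ hne]; ring
      rw [h4, neg_div_neg_eq, div_div_eq_mul_div]
      have h5 : v * Real.exp (2*v) / (Real.exp (2*v) - 1) = v + v / (Real.exp (2*v) - 1) := by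
        rw [div_eq_iff hne2, add_mul, div_mul_cancel₀ _ hne2]; ring
      rw [h5]; ring
    rw [halg, hlog]
    have : Real.exp (-(-v)) = Real.exp v := by ring_nf
    rw [this] at h
    linarith
  · exact key_pos v hpos

/-- Proposition mts-two-lnub: if `r₁ ≤ 2s(ln x₁ + 1)` and `r₂ ≤ 2s(ln x₂ + 1)` then
`f(s,r₁,r₂) ≤ 2s(ln(x₁+x₂)+1)`. -/
theorem mts_two_lnub (s r₁ r₂ x₁ x₂ : ℝ) (hs : 0 < s) (hx₁ : 0 < x₁) (hx₂ : 0 < x₂)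
    (h₁ : r₁ ≤ 2 * s * (Real.log x₁ + 1)) (h₂ : r₂ ≤ 2 * s * (Real.log x₂ + 1)) :
    twoStableRatio s r₁ r₂ ≤ 2 * s * (Real.log (x₁ + x₂) + 1) := by
  -- Step 1: f ≤ 2s log(e^{r₁/2s} + e^{r₂/2s})
  have step1 : twoStableRatio s r₁ r₂ ≤
      2 * s * Real.log (Real.exp (r₁/(2*s)) + Real.exp (r₂/(2*s))) := by
    unfold twoStableRatio
    by_cases h : r₁ = r₂
    · rw [if_pos h, h]
      rw [show Real.exp (r₂/(2*s)) + Real.exp (r₂/(2*s)) = 2 * Real.exp (r₂/(2*s)) by ring,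
          Real.log_mul (by norm_num) (Real.exp_pos _).ne', Real.log_exp]
      have hlog2 : (0.6931471803 : ℝ) < Real.log 2 := Real.log_two_gt_d9
      have hexp : 2 * s * (Real.log 2 + r₂/(2*s)) = 2 * s * Real.log 2 + r₂ := by
        field_simp
      rw [hexp]
      nlinarith
    · rw [if_neg h]
      set v := (r₁ - r₂) / (2*s) with hv_def
      have hvne : v ≠ 0 := by
        simp only [hv_def, div_ne_zero_iff]
        constructor
        · exact sub_ne_zero_of_ne h
        · positivity
      have hkey := key_all v hvne
      have h2v : (r₁ - r₂) / s = 2 * v := by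
        rw [hv_def]; field_simp
      rw [h2v]
      have hr2 : r₂/(2*s) = r₁/(2*s) + (-v) := by
        rw [hv_def]; ring
      have hsum : Real.exp (r₁/(2*s)) + Real.exp (r₂/(2*s)) =
          Real.exp (r₁/(2*s)) * (1 + Real.exp (-v)) := by
        rw [hr2, Real.exp_add]; ring
      rw [hsum, Real.log_mul (Real.exp_pos _).ne' (by positivity), Real.log_exp]
      have hexpand : 2 * s * (r₁/(2*s) + Real.log (1 + Real.exp (-v))) =
          r₁ + 2 * s * Real.log (1 + Real.exp (-v)) := by
        field_simp
      rw [hexpand]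
      have hrv : r₁ - r₂ = 2 * s * v := by
        rw [hv_def]; field_simp
      have hfrac : (r₁ - r₂) / (Real.exp (2*v) - 1) = 2 * s * (v / (Real.exp (2*v) - 1)) := by
        rw [hrv, mul_div_assoc]
      rw [hfrac]
      have : 2 * s * (v / (Real.exp (2*v) - 1)) ≤ 2 * s * Real.log (1 + Real.exp (-v)) := by
        apply mul_le_mul_of_nonneg_left hkey (by positivity)
      linarith
  -- Step 2: e^{rᵢ/(2s)} ≤ e·xᵢ
  have he1 : Real.exp (r₁/(2*s)) ≤ Real.exp 1 * x₁ := by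
    have : r₁/(2*s) ≤ Real.log x₁ + 1 := by
      rw [div_le_iff₀ (by positivity)]; linarith
    calc Real.exp (r₁/(2*s)) ≤ Real.exp (Real.log x₁ + 1) := Real.exp_le_exp.mpr this
    _ = Real.exp 1 * x₁ := by rw [Real.exp_add, Real.exp_log hx₁]; ring
  have he2 : Real.exp (r₂/(2*s)) ≤ Real.exp 1 * x₂ := by
    have : r₂/(2*s) ≤ Real.log x₂ + 1 := by
      rw [div_le_iff₀ (by positivity)]; linarith
    calc Real.exp (r₂/(2*s)) ≤ Real.exp (Real.log x₂ + 1) := Real.exp_le_exp.mpr this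
    _ = Real.exp 1 * x₂ := by rw [Real.exp_add, Real.exp_log hx₂]; ring
  have step2 : Real.log (Real.exp (r₁/(2*s)) + Real.exp (r₂/(2*s))) ≤
      Real.log (x₁ + x₂) + 1 := by
    have hmono : Real.log (Real.exp (r₁/(2*s)) + Real.exp (r₂/(2*s))) ≤
        Real.log (Real.exp 1 * (x₁ + x₂)) := by
      apply Real.log_le_log (by positivity)
      nlinarith
    rw [Real.log_mul (Real.exp_pos _).ne' (by positivity), Real.log_exp] at hmono
    linarith
  calc twoStableRatio s r₁ r₂
      ≤ 2 * s * Real.log (Real.exp (r₁/(2*s)) + Real.exp (r₂/(2*s))) := step1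
    _ ≤ 2 * s * (Real.log (x₁ + x₂) + 1) := by
        apply mul_le_mul_of_nonneg_left step2 (by positivity)
end

section
/- For all real numbers a ≥ b > 0 and z ≥ 1, it holds that a^z + (2^z - 1)·b^z ≤ (a + b)^z. -/
/-- For all reals `a ≥ b > 0` and `z ≥ 1`: `a^z + (2^z - 1) b^z ≤ (a+b)^z` (real powers). -/
theorem rpow_superadditive (a b z : ℝ) (hb : 0 < b) (hab : b ≤ a) (hz : 1 ≤ z) :
    a ^ z + (2 ^ z - 1) * b ^ z ≤ (a + b) ^ z := by
  have hz0 : (0:ℝ) ≤ z - 1 := by linarith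
  have hderiv : ∀ x : ℝ, HasDerivAt (fun x : ℝ => (x + b) ^ z - x ^ z)
      (z * (x + b) ^ (z - 1) - z * x ^ (z - 1)) x := by
    intro x
    have h1 : HasDerivAt (fun x : ℝ => (x + b) ^ z) (z * (x + b) ^ (z - 1) * 1) x :=
      (Real.hasDerivAt_rpow_const (Or.inr hz)).comp x ((hasDerivAt_id x).add_const b)
    have h2 : HasDerivAt (fun x : ℝ => x ^ z) (z * x ^ (z - 1)) x :=
      Real.hasDerivAt_rpow_const (Or.inr hz)
    have h3 := h1.sub h2; rw [mul_one] at h3; exact h3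
  have hmono : MonotoneOn (fun x : ℝ => (x + b) ^ z - x ^ z) (Set.Ici 0) := by
    apply monotoneOn_of_deriv_nonneg (convex_Ici 0)
    · exact (Differentiable.continuous (fun x => (hderiv x).differentiableAt)).continuousOn
    · intro x _; exact (hderiv x).differentiableAt.differentiableWithinAt
    · intro x hx
      rw [(hderiv x).deriv]
      rw [interior_Ici] at hx
      have hx0 : (0:ℝ) < x := hx
      have hle : x ^ (z - 1) ≤ (x + b) ^ (z - 1) :=
        Real.rpow_le_rpow hx0.le (by linarith) hz0
      nlinarith [hle, show (0:ℝ) < z by linarith]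
  have key := hmono (Set.mem_Ici.mpr hb.le) (Set.mem_Ici.mpr (hb.le.trans hab)) hab
  simp only at key
  have hbb : (b + b) ^ z = 2 ^ z * b ^ z := by
    rw [show b + b = 2 * b by ring, Real.mul_rpow (by norm_num) hb.le]
  rw [hbb] at key
  linarith
end

section
/- Let s > 0, r1, r2 ≥ 0, d > 0, and set z = (r1 - r2)/s, r = r1 + (r1 - r2)/(e^{(r1-r2)/s} - 1) (interpreted as r1 + s when r1 = r2). If |z| ≤ 1/2 then r ≥ r2 + s/2, and consequently (2r2 + s)d ≤ 4rd; if instead max(r1, r2) > s/2 then also (2r2 + s)d ≤ 4rd provided r ≥ max(r1, r2) (which holds since z/(e^z-1) ≥ 0). Hence in all cases (2r2 + s)d ≤ 4rd. -/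
private lemma twoStable_aux (z : ℝ) (hz1 : |z| ≤ 1/2) (hz0 : z ≠ 0) :
    1/2 ≤ z * Real.exp z / (Real.exp z - 1) := by
  obtain ⟨hl, hu⟩ := abs_le.mp hz1
  have h1 : 1 + z ≤ Real.exp z := by linarith [Real.add_one_le_exp z]
  have h2 : 1 - z ≤ Real.exp (-z) := by
    have := Real.add_one_le_exp (-z); linarith
  have hprod : Real.exp z * Real.exp (-z) = 1 := by
    rw [← Real.exp_add]; simp
  have hpos : 0 < Real.exp z := Real.exp_pos z
  rcases lt_or_gt_of_ne hz0 with hneg | hposz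
  · have hE : Real.exp z - 1 < 0 := by
      have : Real.exp z < 1 := by
        rw [← Real.exp_zero]; exact Real.exp_lt_exp.mpr hneg
      linarith
    rw [le_div_iff_of_neg hE]
    nlinarith [mul_pos hpos hpos, sq_nonneg z, mul_nonneg hpos.le (sq_nonneg z)]
  · have hE : 0 < Real.exp z - 1 := by
      have : 1 < Real.exp z := by
        rw [← Real.exp_zero]; exact Real.exp_lt_exp.mpr hposz
      linarith
    rw [le_div_iff₀ hE]
    nlinarith [mul_nonneg hposz.le hpos.le]

private lemma twoStable_aux2 (z : ℝ) (hz0 : z ≠ 0) : 0 ≤ z / (Real.exp z - 1) := by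
  rcases lt_or_gt_of_ne hz0 with hneg | hposz
  · have hE : Real.exp z - 1 < 0 := by
      have : Real.exp z < 1 := by
        rw [← Real.exp_zero]; exact Real.exp_lt_exp.mpr hneg
      linarith
    rw [show z / (Real.exp z - 1) = (-z) / (-(Real.exp z - 1)) by rw [neg_div_neg_eq]]
    exact div_nonneg (by linarith) (by linarith)
  · have hE : 0 < Real.exp z - 1 := by
      have : 1 < Real.exp z := by
        rw [← Real.exp_zero]; exact Real.exp_lt_exp.mpr hposz
      linarith
    exact div_nonneg hposz.le hE.le

/-- The potential bound of TwoStable: with `z = (r₁-r₂)/s` and `r` the TwoStable ratio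
(interpreted as `r₁ + s` when `r₁ = r₂`): if `|z| ≤ 1/2` then `r ≥ r₂ + s/2` and
`(2r₂+s)d ≤ 4rd`; if `max r₁ r₂ > s/2` and `r ≥ max r₁ r₂` then `(2r₂+s)d ≤ 4rd`;
and in all cases `(2r₂+s)d ≤ 4rd`. -/
theorem twoStable_potential_bound (s r₁ r₂ d z r : ℝ) (hs : 0 < s)
    (hr₁ : 0 ≤ r₁) (hr₂ : 0 ≤ r₂) (hd : 0 < d)
    (hz : z = (r₁ - r₂) / s)
    (hr : r = if r₁ = r₂ then r₁ + s
          else r₁ + (r₁ - r₂) / (Real.exp ((r₁ - r₂) / s) - 1)) :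
    (|z| ≤ 1 / 2 → r₂ + s / 2 ≤ r ∧ (2 * r₂ + s) * d ≤ 4 * r * d) ∧
    (s / 2 < max r₁ r₂ → max r₁ r₂ ≤ r → (2 * r₂ + s) * d ≤ 4 * r * d) ∧
    (2 * r₂ + s) * d ≤ 4 * r * d := by
  have hu : r₁ - r₂ = z * s := by
    rw [hz]; field_simp
  have rmax : max r₁ r₂ ≤ r := by
    by_cases hEq : r₁ = r₂
    · rw [hr, if_pos hEq]
      subst hEq
      simp; linarith
    · rw [hr, if_neg hEq]
      have hz0 : z ≠ 0 := by
        intro h; apply hEq; rw [h] at hu; linarith [hu]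
      have hzz : (r₁ - r₂) / s = z := hz.symm
      rw [hzz, hu]
      have h2 := twoStable_aux2 z hz0
      have hterm : 0 ≤ z * s / (Real.exp z - 1) := by
        rw [mul_comm, mul_div_assoc]
        exact mul_nonneg hs.le h2
      rcases lt_or_gt_of_ne hz0 with hneg | hposz
      · have hElt : Real.exp z < 1 := by
          rw [← Real.exp_zero]; exact Real.exp_lt_exp.mpr hneg
        have hEpos : 0 < Real.exp z := Real.exp_pos z
        have hE : Real.exp z - 1 < 0 := by linarith
        have hr21 : r₁ < r₂ := by nlinarith
        rw [max_eq_right hr21.le]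
        have heq : z * s / (Real.exp z - 1) = (-(z*s)) / (-(Real.exp z - 1)) := by
          rw [neg_div_neg_eq]
        have hge : -(z * s) ≤ (-(z*s)) / (-(Real.exp z - 1)) := by
          rw [le_div_iff₀ (by linarith)]
          nlinarith [mul_pos (neg_pos.mpr hneg) hs]
        rw [heq]
        linarith
      · have hr12 : r₂ < r₁ := by nlinarith
        rw [max_eq_left hr12.le]
        linarith
  have key1 : |z| ≤ 1/2 → r₂ + s / 2 ≤ r := by
    intro habs
    by_cases hEq : r₁ = r₂
    · rw [hr, if_pos hEq]; subst hEq; linarith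
    · rw [hr, if_neg hEq]
      have hz0 : z ≠ 0 := by
        intro h; apply hEq; rw [h] at hu; linarith [hu]
      have hzz : (r₁ - r₂) / s = z := hz.symm
      rw [hzz, hu]
      have haux := twoStable_aux z habs hz0
      have hEne : Real.exp z - 1 ≠ 0 := by
        intro h
        have h1 : Real.exp z = Real.exp 0 := by rw [Real.exp_zero]; linarith
        exact hz0 (Real.exp_injective h1)
      have keyeq : r₂ + z * s + z * s / (Real.exp z - 1)
          = r₂ + s * (z * Real.exp z / (Real.exp z - 1)) := by
        field_simp; ring
      have heq2 : r₁ + z * s / (Real.exp z - 1)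
          = r₂ + s * (z * Real.exp z / (Real.exp z - 1)) := by
        rw [← keyeq]; linarith [hu]
      rw [heq2]
      nlinarith
  have key2 : s / 2 < max r₁ r₂ → max r₁ r₂ ≤ r → (2 * r₂ + s) * d ≤ 4 * r * d := by
    intro h1 h2
    have hm : r₂ ≤ max r₁ r₂ := le_max_right _ _
    nlinarith
  refine ⟨fun habs => ⟨key1 habs, ?_⟩, key2, ?_⟩
  · have := key1 habs; nlinarith
  · by_cases habs : |z| ≤ 1/2
    · have := key1 habs; nlinarith
    · push_neg at habs
      apply key2 _ rmax
      have habs' : s/2 < |r₁ - r₂| := by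
        rw [hu, abs_mul, abs_of_pos hs]
        nlinarith [abs_nonneg z]
      rcases le_total r₁ r₂ with h | h
      · rw [abs_of_nonpos (by linarith)] at habs'
        calc s/2 < r₂ - r₁ := by linarith
        _ ≤ max r₁ r₂ := by rw [max_eq_right h]; linarith
      · rw [abs_of_nonneg (by linarith)] at habs'
        calc s/2 < r₁ - r₂ := by linarith
        _ ≤ max r₁ r₂ := by rw [max_eq_left h]; linarith
end

section
/- Let M be a finite metric space partitioned into M_i and M_j (i ≠ j) together with other parts, with work function w satisfying |w(x)-w(y)| ≤ β_i·d(x,y) on M_i and ≤ β_j·d(x,y) on M_j. Define ŵ(z_i) = ⟨α_i, w|_{M_i}⟩ − c_i and ŵ(z_j) = ⟨α_j, w|_{M_j}⟩ − c_j where α_i, α_j are weight vectors and 0 ≤ c_i ≤ η_i·diam(M_i), 0 ≤ c_j. Then for u ∈ M_i, v ∈ M_j: ŵ(z_i) − ŵ(z_j) ≥ (w(u) − w(v)) − β_i·diam(M_i) − β_j·diam(M_j) − η_i·diam(M_i). -/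
open scoped BigOperators

lemma key_gap_aux {M : Type*} [MetricSpace M] (S : Finset M) (w : M → ℝ) (β : ℝ)
    (hwS : ∀ x ∈ S, ∀ y ∈ S, |w x - w y| ≤ β * dist x y) :
    ∀ x ∈ S, ∀ y ∈ S, w x - w y ≤ β * Metric.diam (S : Set M) := by
  intro x hx y hy
  rcases le_or_gt 0 β with hβ | hβ
  · calc w x - w y ≤ |w x - w y| := le_abs_self _
      _ ≤ β * dist x y := hwS x hx y hy
      _ ≤ β * Metric.diam (S : Set M) := by
          apply mul_le_mul_of_nonneg_left _ hβ
          exact Metric.dist_le_diam_of_mem S.finite_toSet.isBounded hx hy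
  · -- β < 0: all distances in S are 0
    have hdist : ∀ a ∈ S, ∀ b ∈ S, dist a b ≤ 0 := by
      intro a ha b hb
      by_contra h
      push_neg at h
      have := (abs_nonneg (w a - w b)).trans (hwS a ha b hb)
      nlinarith
    have hdiam : Metric.diam (S : Set M) = 0 := by
      have h1 : Metric.diam (S : Set M) ≤ 0 :=
        Metric.diam_le_of_forall_dist_le le_rfl (fun a ha b hb => hdist a ha b hb)
      exact le_antisymm h1 Metric.diam_nonneg
    have hxy : dist x y = 0 := le_antisymm (hdist x hx y hy) dist_nonneg
    have : w x = w y := by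
      have := hwS x hx y hy
      rw [hxy] at this
      simp at this
      linarith
    rw [this, hdiam]
    simp

lemma sum_weighted_ge {M : Type*} (S : Finset M) (α f : M → ℝ) (a : ℝ)
    (h0 : ∀ x, 0 ≤ α x) (h1 : ∑ x ∈ S, α x = 1) (hf : ∀ x ∈ S, a ≤ f x) :
    a ≤ ∑ x ∈ S, α x * f x := by
  calc a = ∑ x ∈ S, α x * a := by rw [← Finset.sum_mul, h1, one_mul]
    _ ≤ ∑ x ∈ S, α x * f x :=
      Finset.sum_le_sum fun x hx => mul_le_mul_of_nonneg_left (hf x hx) (h0 x)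

/-- The key inequality in the proof of the combining theorem, relating work-function gaps in
the quotient space to gaps in the original space. -/
theorem quotient_workfunction_gap {M : Type*} [MetricSpace M] [Fintype M]
    (S T : Finset M) (hST : Disjoint S T)
    (w : M → ℝ) (βi βj ηi ci cj : ℝ)
    (αi αj : M → ℝ)
    (hαi0 : ∀ x, 0 ≤ αi x) (hαisupp : ∀ x, x ∉ S → αi x = 0) (hαi1 : ∑ x ∈ S, αi x = 1)
    (hαj0 : ∀ x, 0 ≤ αj x) (hαjsupp : ∀ x, x ∉ T → αj x = 0) (hαj1 : ∑ x ∈ T, αj x = 1)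
    (hwS : ∀ x ∈ S, ∀ y ∈ S, |w x - w y| ≤ βi * dist x y)
    (hwT : ∀ x ∈ T, ∀ y ∈ T, |w x - w y| ≤ βj * dist x y)
    (hci0 : 0 ≤ ci) (hci : ci ≤ ηi * Metric.diam (S : Set M)) (hcj0 : 0 ≤ cj) :
    ∀ u ∈ S, ∀ v ∈ T,
      ((∑ x ∈ S, αi x * w x) - ci) - ((∑ x ∈ T, αj x * w x) - cj) ≥
        (w u - w v) - βi * Metric.diam (S : Set M) - βj * Metric.diam (T : Set M)
          - ηi * Metric.diam (S : Set M) := by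
  intro u hu v hv
  have hS : w u - βi * Metric.diam (S : Set M) ≤ ∑ x ∈ S, αi x * w x := by
    apply sum_weighted_ge S αi w _ hαi0 hαi1
    intro x hx
    have := key_gap_aux S w βi hwS u hu x hx
    linarith
  have hT : ∑ x ∈ T, αj x * w x ≤ w v + βj * Metric.diam (T : Set M) := by
    have : -(w v + βj * Metric.diam (T : Set M)) ≤ ∑ x ∈ T, αj x * (-w x) := by
      apply sum_weighted_ge T αj (fun x => -w x) _ hαj0 hαj1
      intro x hx
      have := key_gap_aux T w βj hwT x hx v hv
      linarith
    have hsum : ∑ x ∈ T, αj x * (-w x) = -∑ x ∈ T, αj x * w x := by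
      rw [← Finset.sum_neg_distrib]
      congr 1; ext x; ring
    rw [hsum] at this
    linarith
  linarith
end

section
/- Let M be a finite metric space partitioned into parts M_1, …, M_b, and let M̂ be a metric on points z_1,…,z_b with d_{M̂}(z_i,z_j) ≥ max{d_M(u,v) : u ∈ M_i, v ∈ M_j}. Let p(u) = p̂(z_j)·p_j(u) for u ∈ M_j, where p̂ is a probability vector on M̂ and each p_j is a probability vector on M_j. If p̂' is another probability vector on M̂ and p'(u) = p̂'(z_j)·p_j(u), then mcost_M(p, p') ≤ mcost_{M̂}(p̂, p̂'). -/
open scoped BigOperators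

/-- The optimal transportation cost between two distributions on a finite metric space. -/
noncomputable def mcost {X : Type*} [MetricSpace X] [Fintype X] (p q : X → ℝ) : ℝ :=
  sInf {c : ℝ | ∃ t : X → X → ℝ, (∀ u v, 0 ≤ t u v) ∧
    (∀ u, ∑ v, t u v = p u) ∧ (∀ v, ∑ u, t u v = q v) ∧
    c = ∑ u, ∑ v, t u v * dist u v}

/-- The inter-space cost bound of Proposition samecompratio: moving product-form mass
between the parts of a partition costs no more than the corresponding movement in the
quotient space. -/
theorem interspace_cost_bound {M B : Type*} [MetricSpace M] [Fintype M]
    [MetricSpace B] [Fintype B]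
    (part : M → B) (hsurj : Function.Surjective part)
    (hd : ∀ u v : M, part u ≠ part v → dist u v ≤ dist (part u) (part v))
    (phat phat' : B → ℝ)
    (hphat0 : ∀ j, 0 ≤ phat j) (hphat1 : ∑ j, phat j = 1)
    (hphat'0 : ∀ j, 0 ≤ phat' j) (hphat'1 : ∑ j, phat' j = 1)
    (pj : B → M → ℝ)
    (hpj0 : ∀ j u, 0 ≤ pj j u) (hpj1 : ∀ j, ∑ u, pj j u = 1)
    (hpjsupp : ∀ j u, part u ≠ j → pj j u = 0) :
    mcost (fun u => phat (part u) * pj (part u) u)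
        (fun u => phat' (part u) * pj (part u) u) ≤
      mcost phat phat' := by
  classical
  -- fiber sums of pj
  have hfib : ∀ j : B, ∑ v ∈ Finset.univ.filter (fun v => part v = j), pj j v = 1 := by
    intro j
    rw [← hpj1 j]
    apply Finset.sum_subset (Finset.filter_subset _ _)
    intro v _ hv
    simp only [Finset.mem_filter, Finset.mem_univ, true_and] at hv
    exact hpjsupp j v hv
  -- key summation lemma
  have key : ∀ f : B → ℝ, ∑ v, f (part v) * pj (part v) v = ∑ j, f j := by
    intro f
    rw [← Finset.sum_fiberwise Finset.univ part (fun v => f (part v) * pj (part v) v)]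
    refine Finset.sum_congr rfl fun j _ => ?_
    have : ∑ v ∈ Finset.univ.filter (fun v => part v = j), f (part v) * pj (part v) v
        = ∑ v ∈ Finset.univ.filter (fun v => part v = j), f j * pj j v := by
      refine Finset.sum_congr rfl fun v hv => ?_
      simp only [Finset.mem_filter, Finset.mem_univ, true_and] at hv
      rw [hv]
    rw [this, ← Finset.mul_sum, hfib, mul_one]
  -- nonempty target set (used for le_csInf)
  have hBne : {c : ℝ | ∃ t : B → B → ℝ, (∀ u v, 0 ≤ t u v) ∧
      (∀ u, ∑ v, t u v = phat u) ∧ (∀ v, ∑ u, t u v = phat' v) ∧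
      c = ∑ u, ∑ v, t u v * dist u v}.Nonempty := by
    refine ⟨_, fun i j => phat i * phat' j, fun i j => mul_nonneg (hphat0 i) (hphat'0 j),
      fun i => by rw [← Finset.mul_sum, hphat'1, mul_one],
      fun j => by
        rw [← Finset.sum_mul, hphat1, one_mul], rfl⟩
  rw [mcost]
  refine le_csInf hBne ?_
  rintro c ⟨th, hth0, hthr, hthc, rfl⟩
  -- construct the transport plan on M
  set t : M → M → ℝ := fun u v =>
    if part u = part v then (if u = v then th (part u) (part u) * pj (part u) u else 0)
    else th (part u) (part v) * pj (part u) u * pj (part v) v with ht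
  have ht0 : ∀ u v, 0 ≤ t u v := by
    intro u v
    simp only [ht]
    split
    · split
      · exact mul_nonneg (hth0 _ _) (hpj0 _ _)
      · exact le_rfl
    · exact mul_nonneg (mul_nonneg (hth0 _ _) (hpj0 _ _)) (hpj0 _ _)
  -- fiberwise sums of t (rows)
  have hrowfib : ∀ (u : M) (j : B),
      ∑ v ∈ Finset.univ.filter (fun v => part v = j), t u v
        = th (part u) j * pj (part u) u := by
    intro u j
    by_cases hj : part u = j
    · subst hj
      have : ∑ v ∈ Finset.univ.filter (fun v => part v = part u), t u v
          = ∑ v ∈ Finset.univ.filter (fun v => part v = part u),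
              (if v = u then th (part u) (part u) * pj (part u) u else 0) := by
        refine Finset.sum_congr rfl fun v hv => ?_
        simp only [Finset.mem_filter, Finset.mem_univ, true_and] at hv
        simp only [ht]
        rw [if_pos hv.symm]
        by_cases huv : u = v
        · subst huv; simp
        · rw [if_neg huv, if_neg (Ne.symm huv)]
      rw [this, Finset.sum_ite_eq' _ u]
      simp
    · have : ∑ v ∈ Finset.univ.filter (fun v => part v = j), t u v
          = ∑ v ∈ Finset.univ.filter (fun v => part v = j),
              th (part u) j * pj (part u) u * pj j v := by
        refine Finset.sum_congr rfl fun v hv => ?_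
        simp only [Finset.mem_filter, Finset.mem_univ, true_and] at hv
        simp only [ht, hv, if_neg hj]
      rw [this, ← Finset.mul_sum, hfib, mul_one]
  have hrow : ∀ u, ∑ v, t u v = phat (part u) * pj (part u) u := by
    intro u
    rw [← Finset.sum_fiberwise Finset.univ part (fun v => t u v)]
    calc ∑ j, ∑ v ∈ Finset.univ.filter (fun v => part v = j), t u v
        = ∑ j, th (part u) j * pj (part u) u := by
          exact Finset.sum_congr rfl fun j _ => hrowfib u j
      _ = (∑ j, th (part u) j) * pj (part u) u := by rw [Finset.sum_mul]
      _ = phat (part u) * pj (part u) u := by rw [hthr]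
  -- fiberwise sums of t (columns)
  have hcolfib : ∀ (v : M) (i : B),
      ∑ u ∈ Finset.univ.filter (fun u => part u = i), t u v
        = th i (part v) * pj (part v) v := by
    intro v i
    by_cases hi : part v = i
    · subst hi
      have : ∑ u ∈ Finset.univ.filter (fun u => part u = part v), t u v
          = ∑ u ∈ Finset.univ.filter (fun u => part u = part v),
              (if u = v then th (part v) (part v) * pj (part v) v else 0) := by
        refine Finset.sum_congr rfl fun u hu => ?_
        simp only [Finset.mem_filter, Finset.mem_univ, true_and] at hu
        simp only [ht, hu, if_pos rfl]
        split <;> simp_all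
      rw [this, Finset.sum_ite_eq' _ v]
      simp
    · have : ∑ u ∈ Finset.univ.filter (fun u => part u = i), t u v
          = ∑ u ∈ Finset.univ.filter (fun u => part u = i),
              th i (part v) * pj (part v) v * pj i u := by
        refine Finset.sum_congr rfl fun u hu => ?_
        simp only [Finset.mem_filter, Finset.mem_univ, true_and] at hu
        have hne : part u ≠ part v := by rw [hu]; exact fun h => hi h.symm
        simp only [ht, hu, if_neg hne]
        ring
      rw [this, ← Finset.mul_sum, hfib, mul_one]
  have hcol : ∀ v, ∑ u, t u v = phat' (part v) * pj (part v) v := by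
    intro v
    rw [← Finset.sum_fiberwise Finset.univ part (fun u => t u v)]
    calc ∑ i, ∑ u ∈ Finset.univ.filter (fun u => part u = i), t u v
        = ∑ i, th i (part v) * pj (part v) v := by
          exact Finset.sum_congr rfl fun i _ => hcolfib v i
      _ = (∑ i, th i (part v)) * pj (part v) v := by rw [Finset.sum_mul]
      _ = phat' (part v) * pj (part v) v := by rw [hthc]
  -- the cost of t
  have hcostle : ∑ u, ∑ v, t u v * dist u v ≤ ∑ i, ∑ j, th i j * dist i j := by
    have step1 : ∑ u, ∑ v, t u v * dist u v
        ≤ ∑ u, ∑ v, th (part u) (part v) * dist (part u) (part v)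
            * (pj (part u) u * pj (part v) v) := by
      refine Finset.sum_le_sum fun u _ => Finset.sum_le_sum fun v _ => ?_
      by_cases hp : part u = part v
      · have hdz : dist (part u) (part v) = 0 := by rw [hp, dist_self]
        simp only [ht, if_pos hp, hdz, zero_mul, mul_zero]
        by_cases huv : u = v
        · simp [huv]
        · simp [huv]
      · simp only [ht, if_neg hp]
        have h1 : dist u v ≤ dist (part u) (part v) := hd u v hp
        have : th (part u) (part v) * pj (part u) u * pj (part v) v * dist u v
            ≤ th (part u) (part v) * pj (part u) u * pj (part v) v
              * dist (part u) (part v) := by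
          apply mul_le_mul_of_nonneg_left h1
          exact mul_nonneg (mul_nonneg (hth0 _ _) (hpj0 _ _)) (hpj0 _ _)
        calc th (part u) (part v) * pj (part u) u * pj (part v) v * dist u v
            ≤ th (part u) (part v) * pj (part u) u * pj (part v) v
              * dist (part u) (part v) := this
          _ = th (part u) (part v) * dist (part u) (part v)
              * (pj (part u) u * pj (part v) v) := by ring
    have step2 : ∑ u, ∑ v, th (part u) (part v) * dist (part u) (part v)
            * (pj (part u) u * pj (part v) v)
        = ∑ i, ∑ j, th i j * dist i j := by
      have inner : ∀ u : M, ∑ v, th (part u) (part v) * dist (part u) (part v)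
          * (pj (part u) u * pj (part v) v)
          = (∑ j, th (part u) j * dist (part u) j) * pj (part u) u := by
        intro u
        have : ∀ v : M, th (part u) (part v) * dist (part u) (part v)
            * (pj (part u) u * pj (part v) v)
            = pj (part u) u * ((th (part u) (part v) * dist (part u) (part v))
              * pj (part v) v) := by intro v; ring
        simp only [this]
        rw [← Finset.mul_sum, key (fun j => th (part u) j * dist (part u) j)]
        ring
      simp only [inner]
      rw [key (fun i => ∑ j, th i j * dist i j)]
    exact step1.trans_eq step2
  -- finish: the sInf is at most the cost of t
  have hmem : (∑ u, ∑ v, t u v * dist u v) ∈ {c : ℝ | ∃ t : M → M → ℝ,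
      (∀ u v, 0 ≤ t u v) ∧
      (∀ u, ∑ v, t u v = phat (part u) * pj (part u) u) ∧
      (∀ v, ∑ u, t u v = phat' (part v) * pj (part v) v) ∧
      c = ∑ u, ∑ v, t u v * dist u v} := ⟨t, ht0, hrow, hcol, rfl⟩
  have hbdd : BddBelow {c : ℝ | ∃ t : M → M → ℝ, (∀ u v, 0 ≤ t u v) ∧
      (∀ u, ∑ v, t u v = phat (part u) * pj (part u) u) ∧
      (∀ v, ∑ u, t u v = phat' (part v) * pj (part v) v) ∧
      c = ∑ u, ∑ v, t u v * dist u v} := by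
    refine ⟨0, ?_⟩
    rintro c ⟨s, hs0, _, _, rfl⟩
    exact Finset.sum_nonneg fun u _ => Finset.sum_nonneg fun v _ =>
      mul_nonneg (hs0 u v) dist_nonneg
  calc mcost (fun u => phat (part u) * pj (part u) u)
        (fun u => phat' (part u) * pj (part u) u)
      ≤ ∑ u, ∑ v, t u v * dist u v := csInf_le hbdd hmem
    _ ≤ ∑ i, ∑ j, th i j * dist i j := hcostle
end
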